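/- There is a function C₀(γ,k) of γ, k alone such that the following holds. Let G be a finite connected simple graph and R ≥ 1 a real number such that G^{≤R} has bounded independence with parameters γ, k > 0. For any maximal independent set S of G^{≤R}, the Voronoi clustering vor(S) of G has distance distortion at most C₀(γ,k) at scale R. -/

import Mathlib

open SimpleGraph

/-- The cluster graph (quotient graph) of a clustering given as a setoid:
two distinct clusters are adjacent iff some edge of `G` has one endpoint in each. -/
def clusterGraph {V : Type*} (G : SimpleGraph V) (c : Setoid V) :
    SimpleGraph (Quotient c) where
  Adj x y := x ≠ y ∧ ∃ u v : V, G.Adj u v ∧ Quotient.mk c u = x ∧ Quotient.mk c v = y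
  symm := by
    refine ⟨?_⟩
    rintro x y ⟨hxy, u, v, h1, h2, h3⟩
    exact ⟨hxy.symm, v, u, h1.symm, h3, h2⟩
  loopless := by
    refine ⟨?_⟩
    rintro x ⟨hx, -⟩
    exact hx rfl

/-- A clustering: each equivalence class induces a connected subgraph. -/
def IsClustering {V : Type*} (G : SimpleGraph V) (c : Setoid V) : Prop :=
  ∀ v : V, (G.induce {u | c.r u v}).Connected

/-- `C` bounds the distance distortion of the clustering `c` at scale `R`:
(i) for all `v w`, `1/C ≤ (1 + d(v,w)/R)/(1 + d'([v],[w])) ≤ C`, and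
(ii) the diameter of the subgraph induced by each cluster is at most `C * R`. -/
def DistortionLE {V : Type*} (G : SimpleGraph V) (c : Setoid V) (R C : ℝ) : Prop :=
  (∀ v w : V,
      1 / C ≤ (1 + (G.dist v w : ℝ) / R) /
          (1 + ((clusterGraph G c).dist (Quotient.mk c v) (Quotient.mk c w) : ℝ)) ∧
      (1 + (G.dist v w : ℝ) / R) /
          (1 + ((clusterGraph G c).dist (Quotient.mk c v) (Quotient.mk c w) : ℝ)) ≤ C) ∧
  (∀ v u w : V, ∀ hu : c.r u v, ∀ hw : c.r w v,
      ((G.induce {x | c.r x v}).dist ⟨u, hu⟩ ⟨w, hw⟩ : ℝ) ≤ C * R)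

/-- The power graph `G^{≤R}`: `u ≠ v` adjacent iff their graph distance is at most `R`. -/
def powerGraph {V : Type*} (G : SimpleGraph V) (R : ℝ) : SimpleGraph V where
  Adj u v := u ≠ v ∧ (G.dist u v : ℝ) ≤ R
  symm := by
    refine ⟨?_⟩
    rintro u v ⟨h1, h2⟩
    exact ⟨h1.symm, by rwa [SimpleGraph.dist_comm]⟩
  loopless := by
    refine ⟨?_⟩
    rintro u ⟨h, -⟩
    exact h rfl

/-- `S` is an independent set of the graph `H`. -/
def IsIndepSetOf {V : Type*} (H : SimpleGraph V) (S : Set V) : Prop :=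
  ∀ u ∈ S, ∀ v ∈ S, ¬ H.Adj u v

/-- `S` is a maximal independent set of the graph `H`. -/
def IsMaximalIndepSet {V : Type*} (H : SimpleGraph V) (S : Set V) : Prop :=
  IsIndepSetOf H S ∧ ∀ v : V, v ∉ S → ∃ u ∈ S, H.Adj v u

/-- `G^{≤R}` has bounded independence with parameters `γ, k`: every independent set of
`G^{≤R}` contained in a ball `B_{rR}(v)` has size at most `γ * r ^ k`. -/
def HasBoundedIndependence {V : Type*} (G : SimpleGraph V) (R γ k : ℝ) : Prop :=
  ∀ v : V, ∀ r : ℝ, 0 < r → ∀ S : Set V,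
    IsIndepSetOf (powerGraph G R) S →
    (∀ u ∈ S, (G.dist u v : ℝ) ≤ r * R) →
    (S.ncard : ℝ) ≤ γ * r ^ k

/-- `f` is the cluster-center map of the Voronoi clustering `vor(S)` with tie-breaking
by the injective identifier `ID`. -/
def IsVoronoiMap {V : Type*} (G : SimpleGraph V) (S : Set V) (ID : V → ℕ) (f : V → V) : Prop :=
  ∀ v : V, f v ∈ S ∧ ∀ s ∈ S,
    G.dist (f v) v < G.dist s v ∨ (G.dist (f v) v = G.dist s v ∧ ID (f v) ≤ ID s)

/-- `f` is the cluster-center map of the additively weighted Voronoi clustering `vor(S, W)`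
with tie-breaking by the injective identifier `ID`. -/
def IsWeightedVoronoiMap {V : Type*} (G : SimpleGraph V) (S : Set V) (W : V → ℝ)
    (ID : V → ℕ) (f : V → V) : Prop :=
  ∀ v : V, f v ∈ S ∧ ∀ s ∈ S,
    ((G.dist (f v) v : ℝ) - W (f v) < (G.dist s v : ℝ) - W s) ∨
    ((G.dist (f v) v : ℝ) - W (f v) = (G.dist s v : ℝ) - W s ∧ ID (f v) ≤ ID s)

section A
variable {V : Type} {G : SimpleGraph V} {S : Set V} {ID : V → ℕ} {f : V → V} {R : ℝ}

lemma voronoi_dist_le (hf : IsVoronoiMap G S ID f) {s : V} (hs : s ∈ S) (v : V) :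
    G.dist (f v) v ≤ G.dist s v := by
  rcases (hf v).2 s hs with h | h
  · exact h.le
  · exact h.1.le

lemma voronoi_fixed (hconn : G.Connected) (hf : IsVoronoiMap G S ID f) {s : V} (hs : s ∈ S) :
    f s = s := by
  have h := voronoi_dist_le hf hs s
  rw [SimpleGraph.dist_self] at h
  exact hconn.dist_eq_zero_iff.mp (Nat.le_zero.mp h)

lemma center_close (hconn : G.Connected) (hR : 1 ≤ R)
    (hS : IsMaximalIndepSet (powerGraph G R) S) (hf : IsVoronoiMap G S ID f) (v : V) :
    (G.dist (f v) v : ℝ) ≤ R := by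
  by_cases hv : v ∈ S
  · rw [voronoi_fixed hconn hf hv, SimpleGraph.dist_self]
    push_cast; linarith
  · obtain ⟨u, hu, hadj⟩ := hS.2 v hv
    have h1 : G.dist (f v) v ≤ G.dist u v := voronoi_dist_le hf hu v
    have h2 : (G.dist u v : ℝ) ≤ R := by rw [SimpleGraph.dist_comm]; exact hadj.2
    calc (G.dist (f v) v : ℝ) ≤ (G.dist u v : ℝ) := by exact_mod_cast h1
    _ ≤ R := h2

lemma adj_dist_le_one (h : G.Adj u v) : G.dist u v ≤ 1 :=
  le_trans (SimpleGraph.dist_le (SimpleGraph.Walk.cons h SimpleGraph.Walk.nil)) (by simp)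

lemma voronoi_step (hID : Function.Injective ID) (hconn : G.Connected)
    (hf : IsVoronoiMap G S ID f) {u u' : V} (hadj : G.Adj u u')
    (hlt : G.dist (f u) u' < G.dist (f u) u) : f u' = f u := by
  have hfuS : f u ∈ S := (hf u).1
  have hfu'S : f u' ∈ S := (hf u').1
  have h1 : G.dist (f u') u' ≤ G.dist (f u) u' := voronoi_dist_le hf hfuS u'
  have h2 : G.dist (f u) u ≤ G.dist (f u') u := voronoi_dist_le hf hfu'S u
  have h3 : G.dist (f u') u ≤ G.dist (f u') u' + G.dist u' u :=
    hconn.dist_triangle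
  have h4 : G.dist u' u ≤ 1 := adj_dist_le_one hadj.symm
  -- chain of equalities
  have e1 : G.dist (f u') u' = G.dist (f u) u' := le_antisymm h1 (by omega)
  have e2 : G.dist (f u') u = G.dist (f u) u := le_antisymm (by omega) h2
  have hA := (hf u').2 (f u) hfuS
  have hB := (hf u).2 (f u') hfu'S
  rcases hA with hA | hA
  · omega
  rcases hB with hB | hB
  · omega
  exact hID (le_antisymm hA.2 hB.2)

end A

section B
variable {V : Type} {G : SimpleGraph V} {S : Set V} {ID : V → ℕ} {f : V → V} {R : ℝ}

lemma walk_to_center (hconn : G.Connected) (hID : Function.Injective ID)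
    (hf : IsVoronoiMap G S ID f) (v : V) (hself : f (f v) = f v) :
    ∀ n : ℕ, ∀ u : V, ∀ hu : f u = f v, G.dist (f v) u ≤ n →
      ∃ w : (G.induce {x | f x = f v}).Walk ⟨u, hu⟩ ⟨f v, hself⟩, w.length ≤ n := by
  intro n
  induction n with
  | zero =>
    intro u hu hd
    have : f v = u := hconn.dist_eq_zero_iff.mp (Nat.le_zero.mp hd)
    have he : (⟨f v, hself⟩ : {x | f x = f v}) = ⟨u, hu⟩ := Subtype.ext this
    exact ⟨SimpleGraph.Walk.nil.copy he rfl, by simp⟩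
  | succ n ih =>
    intro u hu hd
    by_cases hle : G.dist (f v) u ≤ n
    · obtain ⟨w, hw⟩ := ih u hu hle
      exact ⟨w, hw.trans (Nat.le_succ n)⟩
    · have hne : G.dist u (f v) ≠ 0 := by rw [SimpleGraph.dist_comm]; omega
      obtain ⟨p, hp⟩ := SimpleGraph.exists_walk_of_dist_ne_zero hne
      cases p with
      | nil => simp at hp; simp only [SimpleGraph.dist_self] at hle; omega
      | cons hadj q =>
        rename_i u₁
        have hq : G.dist (f v) u₁ ≤ n := by
          have h1 : G.dist u₁ (f v) ≤ q.length := SimpleGraph.dist_le q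
          have h2 : G.dist (f v) u₁ = G.dist u₁ (f v) := SimpleGraph.dist_comm
          have h3 : G.dist (f v) u = G.dist u (f v) := SimpleGraph.dist_comm
          simp [SimpleGraph.Walk.length_cons] at hp
          omega
        have hlt : G.dist (f u) u₁ < G.dist (f u) u := by rw [hu]; omega
        have hu₁ : f u₁ = f v := by rw [← hu]; exact voronoi_step hID hconn hf hadj hlt
        obtain ⟨w, hw⟩ := ih u₁ hu₁ hq
        have hadj' : (G.induce {x | f x = f v}).Adj ⟨u, hu⟩ ⟨u₁, hu₁⟩ := hadj
        exact ⟨SimpleGraph.Walk.cons hadj' w, by simp [SimpleGraph.Walk.length_cons]; omega⟩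

lemma exists_cluster_walk (c : Setoid V) :
    ∀ {a b : V} (p : G.Walk a b),
      ∃ q : (clusterGraph G c).Walk (Quotient.mk c a) (Quotient.mk c b),
        ∀ x ∈ q.support, ∃ y ∈ p.support, x = Quotient.mk c y := by
  intro a b p
  induction p with
  | nil => exact ⟨SimpleGraph.Walk.nil, by simp⟩
  | @cons a a' b h p ih =>
    obtain ⟨q, hq⟩ := ih
    by_cases heq : Quotient.mk c a = Quotient.mk c a'
    · refine ⟨q.copy heq.symm rfl, ?_⟩
      intro x hx
      rw [SimpleGraph.Walk.support_copy] at hx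
      obtain ⟨y, hy, hxy⟩ := hq x hx
      exact ⟨y, by simp [SimpleGraph.Walk.support_cons, hy], hxy⟩
    · refine ⟨SimpleGraph.Walk.cons (show (clusterGraph G c).Adj _ _ from ⟨heq, a, a', h, rfl, rfl⟩) q, ?_⟩
      intro x hx
      rw [SimpleGraph.Walk.support_cons, List.mem_cons] at hx
      rcases hx with hx | hx
      · exact ⟨a, by simp [SimpleGraph.Walk.support_cons], hx⟩
      · obtain ⟨y, hy, hxy⟩ := hq x hx
        exact ⟨y, by simp [SimpleGraph.Walk.support_cons, hy], hxy⟩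

lemma clusterGraph_connected (hconn : G.Connected) (c : Setoid V) :
    (clusterGraph G c).Connected := by
  have hne : Nonempty V := hconn.nonempty
  haveI : Nonempty (Quotient c) := Nonempty.map (Quotient.mk c) hne
  constructor
  intro x y
  induction x using Quotient.ind with | _ a =>
  induction y using Quotient.ind with | _ b =>
  obtain ⟨q, -⟩ := exists_cluster_walk c ((hconn.preconnected a b).some)
  exact ⟨q⟩

end B

section C
variable {V : Type} {G : SimpleGraph V} {S : Set V} {ID : V → ℕ} {f : V → V} {R γ k : ℝ}

lemma short_cluster_dist (hconn : G.Connected) (hR : 1 ≤ R)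
    (hBI : HasBoundedIndependence G R γ k)
    (hS : IsMaximalIndepSet (powerGraph G R) S) (hf : IsVoronoiMap G S ID f)
    (v w : V) (hvw : (G.dist v w : ℝ) ≤ R) :
    (((clusterGraph G (Setoid.ker f)).dist (Quotient.mk (Setoid.ker f) v)
      (Quotient.mk (Setoid.ker f) w)) : ℝ) ≤ γ * 2 ^ k := by
  classical
  obtain ⟨p, hp⟩ := hconn.exists_walk_length_eq_dist v w
  obtain ⟨q, hq⟩ := exists_cluster_walk (Setoid.ker f) p
  have hd : (clusterGraph G (Setoid.ker f)).dist (Quotient.mk (Setoid.ker f) v)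
      (Quotient.mk (Setoid.ker f) w) ≤ q.bypass.length := SimpleGraph.dist_le _
  have hnodup : q.bypass.support.Nodup := q.bypass_isPath.support_nodup
  set T : Finset V := p.support.toFinset.image f with hT
  set g : Quotient (Setoid.ker f) → V := Quotient.lift f (fun a b (h : f a = f b) => h) with hg
  have hginj : Function.Injective g := by
    intro x y
    induction x using Quotient.ind with | _ a =>
    induction y using Quotient.ind with | _ b =>
    intro h
    exact Quotient.sound h
  have hsub : q.bypass.support.toFinset.image g ⊆ T := by
    intro z hz
    simp only [Finset.mem_image, List.mem_toFinset] at hz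
    obtain ⟨x, hx, rfl⟩ := hz
    obtain ⟨y, hy, rfl⟩ := hq x (q.support_bypass_subset hx)
    simp only [hT, Finset.mem_image, List.mem_toFinset]
    exact ⟨y, hy, rfl⟩
  have hcard : q.bypass.length + 1 ≤ T.card := by
    have h1 : q.bypass.support.length = q.bypass.length + 1 :=
      SimpleGraph.Walk.length_support _
    have h2 : q.bypass.support.toFinset.card = q.bypass.support.length :=
      List.toFinset_card_of_nodup hnodup
    calc q.bypass.length + 1 = q.bypass.support.toFinset.card := by omega
    _ = (q.bypass.support.toFinset.image g).card :=
        (Finset.card_image_of_injective _ hginj).symm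
    _ ≤ T.card := Finset.card_le_card hsub
  have hTS : ∀ x ∈ (T : Set V), x ∈ S := by
    intro x hx
    simp only [hT, Finset.coe_image, Set.mem_image, Finset.mem_coe, List.coe_toFinset,
      Set.mem_setOf_eq] at hx
    obtain ⟨y, _, rfl⟩ := hx
    exact (hf y).1
  have hind : IsIndepSetOf (powerGraph G R) ↑T :=
    fun a ha b hb => hS.1 a (hTS a ha) b (hTS b hb)
  have hball : ∀ t ∈ (T : Set V), (G.dist t v : ℝ) ≤ 2 * R := by
    intro t ht
    simp only [hT, Finset.coe_image, Set.mem_image, Finset.mem_coe, List.coe_toFinset,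
      Set.mem_setOf_eq] at ht
    obtain ⟨y, hy, rfl⟩ := ht
    obtain ⟨p₁, p₂, rfl⟩ := SimpleGraph.Walk.mem_support_iff_exists_append.mp hy
    have hyv : G.dist v y ≤ G.dist v w := by
      have hle := SimpleGraph.dist_le p₁
      have hl := SimpleGraph.Walk.length_append p₁ p₂
      omega
    have h1 : (G.dist (f y) y : ℝ) ≤ R := center_close hconn hR hS hf y
    have h2 : (G.dist (f y) v : ℝ) ≤ (G.dist (f y) y : ℝ) + (G.dist y v : ℝ) := by
      exact_mod_cast hconn.dist_triangle
    have h3 : (G.dist y v : ℝ) = (G.dist v y : ℝ) := by rw [SimpleGraph.dist_comm]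
    have h4 : (G.dist v y : ℝ) ≤ R := le_trans (by exact_mod_cast hyv) hvw
    linarith
  have hb := hBI v 2 two_pos ↑T hind (by intro u hu; exact hball u hu)
  rw [Set.ncard_coe_finset] at hb
  have hc : ((q.bypass.length : ℝ)) + 1 ≤ (T.card : ℝ) := by exact_mod_cast hcard
  have hd' : (((clusterGraph G (Setoid.ker f)).dist (Quotient.mk (Setoid.ker f) v)
      (Quotient.mk (Setoid.ker f) w)) : ℝ) ≤ (q.bypass.length : ℝ) := by exact_mod_cast hd
  linarith

lemma exists_mid (hconn : G.Connected) :
    ∀ {v w : V} (p : G.Walk v w) (n : ℕ),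
      ∃ x : V, G.dist v x ≤ n ∧ G.dist x w ≤ p.length - n := by
  intro v w p
  induction p with
  | @nil u => intro n; exact ⟨u, by simp [SimpleGraph.dist_self], by simp [SimpleGraph.dist_self]⟩
  | @cons u u' w h p ih =>
    intro n
    match n with
    | 0 =>
      refine ⟨u, by simp, ?_⟩
      simpa using SimpleGraph.dist_le (SimpleGraph.Walk.cons h p)
    | n+1 =>
      obtain ⟨x, h1, h2⟩ := ih n
      refine ⟨x, ?_, by simpa [Nat.succ_sub_succ] using h2⟩
      have ht : G.dist u x ≤ G.dist u u' + G.dist u' x := hconn.dist_triangle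
      have ha : G.dist u u' ≤ 1 := adj_dist_le_one h
      omega

lemma cluster_dist_scaled (hconn : G.Connected) (hR : 1 ≤ R)
    (hγ : 0 < γ) (hBI : HasBoundedIndependence G R γ k)
    (hS : IsMaximalIndepSet (powerGraph G R) S) (hf : IsVoronoiMap G S ID f) :
    ∀ n : ℕ, ∀ v w : V, G.dist v w ≤ n →
      ((clusterGraph G (Setoid.ker f)).dist (Quotient.mk (Setoid.ker f) v)
        (Quotient.mk (Setoid.ker f) w) : ℝ) * (⌊R⌋₊ : ℝ)
        ≤ (γ * 2 ^ k) * ((G.dist v w : ℝ) + (⌊R⌋₊ : ℝ)) := by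
  have hN1 : 1 ≤ ⌊R⌋₊ := Nat.le_floor (by exact_mod_cast hR)
  have hNR : (⌊R⌋₊ : ℝ) ≤ R := Nat.floor_le (by linarith)
  have hA : (0:ℝ) ≤ γ * 2 ^ k := by positivity
  intro n
  induction n using Nat.strong_induction_on with
  | _ n ih =>
    intro v w hvw
    by_cases hshort : G.dist v w ≤ ⌊R⌋₊
    · have hb := short_cluster_dist hconn hR hBI hS hf v w
        (le_trans (by exact_mod_cast hshort) hNR)
      have h0 : (0:ℝ) ≤ (G.dist v w : ℝ) := Nat.cast_nonneg _
      have hN0 : (0:ℝ) ≤ (⌊R⌋₊ : ℝ) := Nat.cast_nonneg _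
      nlinarith [mul_le_mul_of_nonneg_right hb hN0, mul_nonneg hA h0]
    · push_neg at hshort
      obtain ⟨p, hp⟩ := hconn.exists_walk_length_eq_dist v w
      obtain ⟨x, h1, h2⟩ := exists_mid hconn p ⌊R⌋₊
      rw [hp] at h2
      have htri : (clusterGraph G (Setoid.ker f)).dist (Quotient.mk (Setoid.ker f) v)
            (Quotient.mk (Setoid.ker f) w) ≤
          (clusterGraph G (Setoid.ker f)).dist (Quotient.mk (Setoid.ker f) v)
            (Quotient.mk (Setoid.ker f) x) +
          (clusterGraph G (Setoid.ker f)).dist (Quotient.mk (Setoid.ker f) x)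
            (Quotient.mk (Setoid.ker f) w) :=
        (clusterGraph_connected hconn _).dist_triangle
      have hbase : ((clusterGraph G (Setoid.ker f)).dist (Quotient.mk (Setoid.ker f) v)
          (Quotient.mk (Setoid.ker f) x) : ℝ) ≤ γ * 2 ^ k :=
        short_cluster_dist hconn hR hBI hS hf v x (le_trans (by exact_mod_cast h1) hNR)
      have hih := ih (n-1) (by omega) x w (by omega)
      have hxw : (G.dist x w : ℝ) + (⌊R⌋₊ : ℝ) ≤ (G.dist v w : ℝ) := by
        have : G.dist x w + ⌊R⌋₊ ≤ G.dist v w := by omega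
        exact_mod_cast this
      have hc : ((clusterGraph G (Setoid.ker f)).dist (Quotient.mk (Setoid.ker f) v)
            (Quotient.mk (Setoid.ker f) w) : ℝ) ≤ γ * 2 ^ k +
          ((clusterGraph G (Setoid.ker f)).dist (Quotient.mk (Setoid.ker f) x)
            (Quotient.mk (Setoid.ker f) w) : ℝ) := by
        have hcN : ((clusterGraph G (Setoid.ker f)).dist (Quotient.mk (Setoid.ker f) v)
            (Quotient.mk (Setoid.ker f) w) : ℝ) ≤
            ((clusterGraph G (Setoid.ker f)).dist (Quotient.mk (Setoid.ker f) v)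
              (Quotient.mk (Setoid.ker f) x) : ℝ) +
            ((clusterGraph G (Setoid.ker f)).dist (Quotient.mk (Setoid.ker f) x)
              (Quotient.mk (Setoid.ker f) w) : ℝ) := by exact_mod_cast htri
        linarith
      have hN0 : (0:ℝ) ≤ (⌊R⌋₊ : ℝ) := Nat.cast_nonneg _
      nlinarith [mul_le_mul_of_nonneg_right hc hN0,
        mul_le_mul_of_nonneg_left hxw hA]

lemma same_cluster_dist (hconn : G.Connected) (hR : 1 ≤ R)
    (hS : IsMaximalIndepSet (powerGraph G R) S) (hf : IsVoronoiMap G S ID f)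
    {v w : V} (h : f v = f w) : (G.dist v w : ℝ) ≤ 2 * R := by
  have h1 : (G.dist v w : ℝ) ≤ (G.dist v (f v) : ℝ) + (G.dist (f v) w : ℝ) := by
    exact_mod_cast hconn.dist_triangle
  have h2 : (G.dist (f v) v : ℝ) ≤ R := center_close hconn hR hS hf v
  have h3 : (G.dist (f w) w : ℝ) ≤ R := center_close hconn hR hS hf w
  have h4 : (G.dist v (f v) : ℝ) = (G.dist (f v) v : ℝ) := by rw [SimpleGraph.dist_comm]
  have h5 : (G.dist (f v) w : ℝ) = (G.dist (f w) w : ℝ) := by rw [h]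
  linarith

lemma dist_le_cluster_walk (hconn : G.Connected) (hR : 1 ≤ R)
    (hS : IsMaximalIndepSet (powerGraph G R) S) (hf : IsVoronoiMap G S ID f) :
    ∀ (x y : Quotient (Setoid.ker f)) (q : (clusterGraph G (Setoid.ker f)).Walk x y)
      (v w : V), Quotient.mk (Setoid.ker f) v = x → Quotient.mk (Setoid.ker f) w = y →
      (G.dist v w : ℝ) ≤ (2*R+1) * q.length + 2*R := by
  intro x y q
  induction q with
  | nil =>
    intro v w hv hw
    have hfvw : f v = f w := Quotient.exact (hv.trans hw.symm)
    have := same_cluster_dist hconn hR hS hf hfvw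
    simpa using this
  | @cons x x₁ y h q ih =>
    intro v w hv hw
    obtain ⟨hne, a, b, hab, ha, hb⟩ := id h
    have hfa : f a = f v := Quotient.exact (ha.trans hv.symm)
    have hbw := ih b w hb hw
    have t1 : G.dist v w ≤ G.dist v a + G.dist a w := hconn.dist_triangle
    have t2 : G.dist a w ≤ G.dist a b + G.dist b w := hconn.dist_triangle
    have t3 : G.dist a b ≤ 1 := adj_dist_le_one hab
    have t4 : (G.dist v a : ℝ) ≤ 2*R := same_cluster_dist hconn hR hS hf hfa.symm
    have t5 : (G.dist v w : ℝ) ≤ (G.dist v a : ℝ) + 1 + (G.dist b w : ℝ) := by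
      have : G.dist v w ≤ G.dist v a + 1 + G.dist b w := by omega
      exact_mod_cast this
    rw [SimpleGraph.Walk.length_cons]
    push_cast
    nlinarith [hbw, t4, t5]

end C

/-- There is a function `C₀(γ,k)` of `γ, k` alone such that: if `G` is a finite
connected simple graph and `R ≥ 1` is such that `G^{≤R}` has bounded independence with
parameters `γ, k > 0`, then for any maximal independent set `S` of `G^{≤R}`, the Voronoi
clustering `vor(S)` of `G` has distance distortion at most `C₀(γ,k)` at scale `R`. -/
theorem stmt8 :
    ∃ C₀ : ℝ → ℝ → ℝ, (∀ γ k : ℝ, 1 ≤ C₀ γ k) ∧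
      ∀ (V : Type) [Fintype V] (G : SimpleGraph V), G.Connected →
      ∀ R : ℝ, 1 ≤ R → ∀ γ k : ℝ, 0 < γ → 0 < k →
      HasBoundedIndependence G R γ k →
      ∀ S : Set V, IsMaximalIndepSet (powerGraph G R) S →
      ∀ ID : V → ℕ, Function.Injective ID →
      ∀ f : V → V, IsVoronoiMap G S ID f →
      DistortionLE G (Setoid.ker f) R (C₀ γ k) := by
  refine ⟨fun γ k => 4 + 2 * |γ| * 2 ^ k, ?_, ?_⟩
  · intro γ k
    show (1:ℝ) ≤ 4 + 2 * |γ| * 2 ^ k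
    have h1 : (0:ℝ) < 2 ^ k := by positivity
    have h2 : (0:ℝ) ≤ |γ| := abs_nonneg γ
    nlinarith
  intro V _ G hconn R hR γ k hγ hk hBI S hS ID hID f hf
  have hγabs : |γ| = γ := abs_of_pos hγ
  set C : ℝ := 4 + 2 * |γ| * 2 ^ k with hC
  set A : ℝ := γ * 2 ^ k with hA
  have hCA : C = 4 + 2 * A := by rw [hC, hA, hγabs]; ring
  have hApos : 0 < A := by rw [hA]; positivity
  have hC4 : (4:ℝ) ≤ C := by nlinarith
  have hC0 : (0:ℝ) < C := by linarith
  have hR0 : (0:ℝ) < R := by linarith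
  have hN1 : 1 ≤ ⌊R⌋₊ := Nat.le_floor (by exact_mod_cast hR)
  have hNR : (⌊R⌋₊ : ℝ) ≤ R := Nat.floor_le (by linarith)
  have hN1' : (1:ℝ) ≤ (⌊R⌋₊ : ℝ) := by exact_mod_cast hN1
  have hR2N : R ≤ 2 * (⌊R⌋₊ : ℝ) := by
    have := Nat.lt_floor_add_one R
    linarith
  constructor
  · -- condition (i)
    intro v w
    set D : ℝ := (G.dist v w : ℝ) with hD
    set L : ℝ := ((clusterGraph G (Setoid.ker f)).dist (Quotient.mk (Setoid.ker f) v)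
      (Quotient.mk (Setoid.ker f) w) : ℝ) with hL
    have hD0 : 0 ≤ D := Nat.cast_nonneg _
    have hL0 : 0 ≤ L := Nat.cast_nonneg _
    have h1L : (0:ℝ) < 1 + L := by linarith
    -- upper bound on D in terms of L
    obtain ⟨q, hq⟩ := (clusterGraph_connected hconn (Setoid.ker f)).exists_walk_length_eq_dist
      (Quotient.mk (Setoid.ker f) v) (Quotient.mk (Setoid.ker f) w)
    have hUp : D ≤ (2*R+1) * L + 2*R := by
      have := dist_le_cluster_walk hconn hR hS hf _ _ q v w rfl rfl
      rw [hq] at this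
      exact this
    -- lower bound via bounded independence
    have hLow : L * (⌊R⌋₊ : ℝ) ≤ A * (D + (⌊R⌋₊ : ℝ)) :=
      cluster_dist_scaled hconn hR hγ hBI hS hf (G.dist v w) v w le_rfl
    -- key1 : (1+L)*R ≤ C*(R+D)
    have s1 : L * R ≤ L * (2 * (⌊R⌋₊ : ℝ)) :=
      mul_le_mul_of_nonneg_left hR2N hL0
    have s4 : A * (D + (⌊R⌋₊ : ℝ)) ≤ A * (D + R) :=
      mul_le_mul_of_nonneg_left (by linarith) (le_of_lt hApos)
    have key1 : (1 + L) * R ≤ C * (R + D) := by nlinarith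
    have e1 : 1 + D / R = (R + D) / R := by field_simp
    refine ⟨?_, ?_⟩
    · rw [div_le_div_iff₀ hC0 h1L, one_mul, e1]
      have h2 : (R + D) / R * C = C * (R + D) / R := by ring
      rw [h2, le_div_iff₀ hR0]
      linarith
    · rw [div_le_iff₀ h1L, e1, div_le_iff₀ hR0]
      -- R + D ≤ C * (1 + L) * R
      have t1 : L * 1 ≤ L * R := mul_le_mul_of_nonneg_left hR hL0
      nlinarith
  · -- condition (ii)
    intro v u w hu hw
    have hu' : f u = f v := hu
    have hw' : f w = f v := hw
    have hself : f (f v) = f v := voronoi_fixed hconn hf (hf v).1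
    have hcc : ∀ x : V, f x = f v → G.dist (f v) x ≤ ⌊R⌋₊ := by
      intro x hx
      rw [← hx]
      exact Nat.le_floor (center_close hconn hR hS hf x)
    obtain ⟨w1, hw1⟩ := walk_to_center hconn hID hf v hself ⌊R⌋₊ u hu' (hcc u hu')
    obtain ⟨w2, hw2⟩ := walk_to_center hconn hID hf v hself ⌊R⌋₊ w hw' (hcc w hw')
    have hdist : (G.induce {x | f x = f v}).dist ⟨u, hu'⟩ ⟨w, hw'⟩ ≤
        (w1.append w2.reverse).length := SimpleGraph.dist_le _
    have hlen : (w1.append w2.reverse).length ≤ ⌊R⌋₊ + ⌊R⌋₊ := by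
      rw [SimpleGraph.Walk.length_append, SimpleGraph.Walk.length_reverse]
      omega
    have hfin : ((G.induce {x | f x = f v}).dist ⟨u, hu'⟩ ⟨w, hw'⟩ : ℝ) ≤ C * R := by
      have h1 : ((G.induce {x | f x = f v}).dist ⟨u, hu'⟩ ⟨w, hw'⟩ : ℝ) ≤
          (⌊R⌋₊ : ℝ) + (⌊R⌋₊ : ℝ) := by exact_mod_cast le_trans hdist hlen
      nlinarith
    exact hfin
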